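/- arXiv:1607.01235 — 2 statements merged into one kernel-verified Lean document; each statement's English description precedes it below -/
import Mathlib

section
/- Let p ≥ 2 be a real number and n ≥ 1. For every x, y ∈ ℝⁿ one has (|x|^(p−2) x − |y|^(p−2) y) · (x − y) ≥ (2 / (p (2^(p−1) − 1))) |x − y|^p, where · denotes the Euclidean inner product and |·| the Euclidean norm. -/
open scoped RealInnerProductSpace
open Finset

/-!
Adding Lindqvist's inequality
`‖a‖^p + p ‖a‖^(p-2) ⟪a, v⟫ + ‖v‖^p / (2^(p-1) - 1) ≤ ‖a + v‖^p`
at `(a, v) = (y, x - y)` and at `(x, y - x)` gives the theorem.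

Lindqvist's inequality comes from repeated halving. For `h t = ‖a + t • v‖^p - ‖a‖^p`, Clarkson's
inequality gives `2 h s + 2 s^p ‖v‖^p ≤ h (2 s)`, so `2^K h (2^-K)` drops from `h 1` by at least
`‖v‖^p 2^((1-p)(K+1))` at each step, while convexity of `‖·‖^p` keeps it above the directional
derivative `p ‖a‖^(p-2) ⟪a, v⟫`. Summing the geometric series gives the constant.
-/

namespace Real

theorem tangent_le_rpow {q a b : ℝ} (hq : 1 < q) (ha : 0 ≤ a) (hb : 0 ≤ b) :
    a ^ q + q * a ^ (q - 1) * (b - a) ≤ b ^ q := by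
  rcases ha.eq_or_lt with rfl | ha
  · rw [zero_rpow (by linarith), zero_rpow (by linarith)]
    simpa using rpow_nonneg hb q
  · have bernoulli := one_add_mul_self_le_rpow_one_add (s := b / a - 1)
      (by linarith [div_nonneg hb ha.le]) hq.le
    rw [add_sub_cancel, div_rpow hb ha.le, le_div_iff₀ (rpow_pos_of_pos ha q)] at bernoulli
    calc a ^ q + q * a ^ (q - 1) * (b - a)
        = (1 + q * (b / a - 1)) * a ^ q := by
          rw [rpow_sub ha, rpow_one]; field_simp
      _ ≤ b ^ q := bernoulli

theorem add_div_one_sub_le_of_succ_add_pow_le {D : ℕ → ℝ} {L c r : ℝ} (hr₀ : 0 ≤ r)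
    (hr₁ : r < 1) (hstep : ∀ K, D (K + 1) + c * r ^ K ≤ D K) (hL : ∀ K, L ≤ D K) :
    L + c / (1 - r) ≤ D 0 := by
  have telescoped : ∀ K, D K + ∑ j ∈ range K, c * r ^ j ≤ D 0 := by
    intro K
    induction K with
    | zero => simp
    | succ K ih => rw [sum_range_succ]; linarith [hstep K]
  have hsum : HasSum (fun j ↦ c * r ^ j) (c / (1 - r)) := by
    simpa [div_eq_mul_inv] using (hasSum_geometric_of_lt_one hr₀ hr₁).mul_left c
  have : c / (1 - r) ≤ D 0 - L :=
    le_of_tendsto' hsum.tendsto_sum_nat fun K ↦ by linarith [telescoped K, hL K]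
  linarith

theorem two_pow_mul_inv_two_pow_rpow (p : ℝ) (K : ℕ) :
    (2 : ℝ) ^ K * (((2 : ℝ) ^ K)⁻¹) ^ p = ((2 : ℝ) ^ (1 - p)) ^ K := by
  rw [inv_rpow (by positivity), ← rpow_pow_comm zero_le_two, rpow_sub two_pos, rpow_one,
    div_pow, div_eq_mul_inv]

theorem add_div_le_apply_one_of_doubling {h : ℝ → ℝ} {p L M : ℝ} (hp : 1 < p)
    (hdouble : ∀ s > 0, 2 * h s + 2 * s ^ p * M ≤ h (2 * s))
    (htangent : ∀ t > 0, t * L ≤ h t) :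
    L + M / (2 ^ (p - 1) - 1) ≤ h 1 := by
  set r : ℝ := 2 ^ (1 - p)
  have hr₁ : r < 1 := rpow_lt_one_of_one_lt_of_neg one_lt_two (by linarith)
  have hstep : ∀ K : ℕ,
      2 ^ (K + 1) * h (2 ^ (K + 1))⁻¹ + r * M * r ^ K ≤ 2 ^ K * h (2 ^ K)⁻¹ := by
    intro K
    have hK := mul_le_mul_of_nonneg_left (hdouble (2 ^ (K + 1))⁻¹ (by positivity))
      (by positivity : (0 : ℝ) ≤ 2 ^ K)
    rw [show (2 : ℝ) * (2 ^ (K + 1))⁻¹ = (2 ^ K)⁻¹ by rw [pow_succ]; field_simp] at hK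
    have hpow : (2 : ℝ) ^ (K + 1) * ((2 ^ (K + 1))⁻¹) ^ p = r ^ (K + 1) :=
      two_pow_mul_inv_two_pow_rpow p (K + 1)
    simp only [pow_succ] at hK hpow ⊢
    linear_combination hK - M * hpow
  have hbound : ∀ K : ℕ, L ≤ 2 ^ K * h (2 ^ K)⁻¹ := fun K ↦ by
    have := htangent (2 ^ K)⁻¹ (by positivity)
    rw [← inv_mul_le_iff₀ (by positivity)]
    linarith
  have := add_div_one_sub_le_of_succ_add_pow_le (D := fun K : ℕ ↦ 2 ^ K * h (2 ^ K)⁻¹)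
    (rpow_nonneg zero_le_two _) hr₁ hstep hbound
  have hr : r * M / (1 - r) = M / (2 ^ (p - 1) - 1) := by
    have : (1 : ℝ) < 2 ^ (p - 1) := one_lt_rpow one_lt_two (by linarith)
    rw [show r = (2 ^ (p - 1))⁻¹ by rw [← rpow_neg zero_le_two, neg_sub]]
    field_simp
  rw [hr] at this
  simpa using this

end Real

section InnerProductSpace

variable {E : Type*} [NormedAddCommGroup E] [InnerProductSpace ℝ E]

theorem norm_rpow_add_mul_inner_le {p : ℝ} (hp : 1 < p) (a u : E) :
    ‖a‖ ^ p + p * ‖a‖ ^ (p - 2) * ⟪a, u⟫ ≤ ‖a + u‖ ^ p := by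
  rcases eq_or_ne a 0 with rfl | ha
  · simp only [norm_zero, inner_zero_left, mul_zero, add_zero, zero_add,
      Real.zero_rpow (by linarith : p ≠ 0)]
    positivity
  have hna : 0 < ‖a‖ := norm_pos_iff.mpr ha
  have hinner : ⟪a, u⟫ ≤ ‖a‖ * (‖a + u‖ - ‖a‖) := by
    have := real_inner_le_norm a (a + u)
    rw [inner_add_right, real_inner_self_eq_norm_sq] at this
    linarith
  have hpow : ‖a‖ ^ (p - 2) * ‖a‖ = ‖a‖ ^ (p - 1) := by
    rw [← Real.rpow_add_one hna.ne']; ring_nf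
  calc ‖a‖ ^ p + p * ‖a‖ ^ (p - 2) * ⟪a, u⟫
      ≤ ‖a‖ ^ p + p * ‖a‖ ^ (p - 2) * (‖a‖ * (‖a + u‖ - ‖a‖)) := by gcongr
    _ = ‖a‖ ^ p + p * ‖a‖ ^ (p - 1) * (‖a + u‖ - ‖a‖) := by rw [← hpow]; ring
    _ ≤ ‖a + u‖ ^ p := Real.tangent_le_rpow hp hna.le (norm_nonneg _)

theorem norm_rpow_add_norm_rpow_le {p : ℝ} (hp : 2 ≤ p) (u w : E) :
    ‖u‖ ^ p + ‖w‖ ^ p ≤ (‖u + w‖ ^ p + ‖u - w‖ ^ p) / 2 := by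
  have hq : 1 ≤ p / 2 := by linarith
  have sq_rpow (x : E) : (‖x‖ ^ 2) ^ (p / 2) = ‖x‖ ^ p := by
    rw [← Real.rpow_natCast, ← Real.rpow_mul (norm_nonneg x)]; ring_nf
  have parallelogram :
      ‖u‖ ^ 2 + ‖w‖ ^ 2 = (1 / 2 : ℝ) * ‖u + w‖ ^ 2 + (1 / 2 : ℝ) * ‖u - w‖ ^ 2 := by
    linarith [parallelogram_law_with_norm ℝ u w]
  calc ‖u‖ ^ p + ‖w‖ ^ p = (‖u‖ ^ 2) ^ (p / 2) + (‖w‖ ^ 2) ^ (p / 2) := by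
        rw [sq_rpow, sq_rpow]
    _ ≤ (‖u‖ ^ 2 + ‖w‖ ^ 2) ^ (p / 2) :=
        Real.add_rpow_le_rpow_add (by positivity) (by positivity) hq
    _ ≤ (1 / 2 : ℝ) * (‖u + w‖ ^ 2) ^ (p / 2) + (1 / 2 : ℝ) * (‖u - w‖ ^ 2) ^ (p / 2) := by
        rw [parallelogram]
        exact (convexOn_rpow hq).2 (sq_nonneg ‖u + w‖) (sq_nonneg ‖u - w‖) (by norm_num)
          (by norm_num) (by norm_num)
    _ = (‖u + w‖ ^ p + ‖u - w‖ ^ p) / 2 := by rw [sq_rpow, sq_rpow]; ring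

theorem lindqvist_inequality {p : ℝ} (hp : 2 ≤ p) (a v : E) :
    ‖a‖ ^ p + p * ‖a‖ ^ (p - 2) * ⟪a, v⟫ + ‖v‖ ^ p / (2 ^ (p - 1) - 1) ≤ ‖a + v‖ ^ p := by
  have key := Real.add_div_le_apply_one_of_doubling
    (h := fun t : ℝ ↦ ‖a + t • v‖ ^ p - ‖a‖ ^ p)
    (L := p * ‖a‖ ^ (p - 2) * ⟪a, v⟫) (M := ‖v‖ ^ p) (by linarith) ?_ ?_
  · simp only [one_smul] at key
    linarith
  · intro s hs
    have := norm_rpow_add_norm_rpow_le hp (a + s • v) (s • v)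
    rw [add_sub_cancel_right, add_assoc, ← add_smul, ← two_mul, norm_smul,
      Real.norm_of_nonneg hs.le, Real.mul_rpow hs.le (norm_nonneg v)] at this
    linarith
  · intro t ht
    have := norm_rpow_add_mul_inner_le (by linarith : 1 < p) a (t • v)
    rw [real_inner_smul_right] at this
    linarith

end InnerProductSpace

theorem chabrowski_inequality_general
    (n : ℕ) (p : ℝ) (hp : 2 ≤ p)
    (x y : EuclideanSpace ℝ (Fin n)) :
    ⟪(‖x‖ ^ (p - 2)) • x - (‖y‖ ^ (p - 2)) • y, x - y⟫ ≥
      (2 / (p * (2 ^ (p - 1) - 1))) * ‖x - y‖ ^ p := by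
  have hxy := lindqvist_inequality hp y (x - y)
  have hyx := lindqvist_inequality hp x (y - x)
  rw [add_sub_cancel y x] at hxy
  rw [add_sub_cancel x y] at hyx
  rw [norm_sub_rev y x, ← neg_sub x y, inner_neg_right] at hyx
  have hc : 0 < 2 ^ (p - 1) - (1 : ℝ) := by
    linarith [Real.one_lt_rpow one_lt_two (by linarith : 0 < p - 1)]
  have hsum : 2 * (‖x - y‖ ^ p / (2 ^ (p - 1) - 1)) ≤
      p * (‖x‖ ^ (p - 2) * ⟪x, x - y⟫ - ‖y‖ ^ (p - 2) * ⟪y, x - y⟫) := by linarith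
  rw [mul_div_assoc', div_le_iff₀ hc] at hsum
  rw [ge_iff_le, inner_sub_left, real_inner_smul_left, real_inner_smul_left,
    div_mul_eq_mul_div, div_le_iff₀ (by positivity)]
  linarith

/-- For `p ≥ 2` and `x, y ∈ ℝⁿ`,
`(|x|^(p-2) x − |y|^(p-2) y) · (x − y) ≥ (2 / (p (2^(p-1) − 1))) |x − y|^p`. -/
theorem chabrowski_inequality
    (n : ℕ) (hn : 1 ≤ n) (p : ℝ) (hp : 2 ≤ p)
    (x y : EuclideanSpace ℝ (Fin n)) :
    ⟪(‖x‖ ^ (p - 2)) • x - (‖y‖ ^ (p - 2)) • y, x - y⟫ ≥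
      (2 / (p * (2 ^ (p - 1) - 1))) * ‖x - y‖ ^ p :=
  chabrowski_inequality_general n p hp x y
end

section
/- Let p ≥ 2 be a real number and let f : ℝ → ℝ be continuous with lim_{t→0} f(t)/|t|^(p−1) = 0 and lim_{|t|→+∞} f(t)/|t|^(p−1) = 0, and set F(t) = ∫₀ᵗ f(s) ds. Then for every ε > 0 and every η > 0 there exists a constant M_ε ≥ 0 such that |F(t)| ≤ (ε/p) |t|^p + (M_ε/(p+η)) |t|^(p+η) for all t ∈ ℝ. -/
/-!
Write `f t = g t · |t|^(p-1)` with `g t = f t / |t|^(p-1)`. The ratio `g` is below `ε` near `0`,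
and bounded on `|t| ≥ δ` (by continuity on compacts and the limit at infinity), so
`|g t| ≤ ε + C |t|^η` everywhere. Hence `|f t| ≤ ε |t|^(p-1) + C |t|^(p+η-1)`, and integrating
this bound from `0` to `t` gives the estimate on `F`.
-/

open Filter Topology

lemma eq_zero_of_tendsto_div_abs_rpow {f : ℝ → ℝ} (hf : ContinuousAt f 0) {q : ℝ} (hq : 0 < q)
    (h : Tendsto (fun t => f t / |t| ^ q) (𝓝[≠] 0) (𝓝 0)) : f 0 = 0 := by
  have hpow : Tendsto (fun t : ℝ => |t| ^ q) (𝓝[≠] 0) (𝓝 0) := by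
    have hcont : Continuous fun t : ℝ => |t| ^ q :=
      continuous_abs.rpow_const fun _ => Or.inr hq.le
    exact (hcont.tendsto' 0 0 (by simp [hq.ne'])).mono_left nhdsWithin_le_nhds
  have hprod : Tendsto f (𝓝[≠] 0) (𝓝 0) := by
    refine (mul_zero (0 : ℝ) ▸ h.mul hpow).congr' ?_
    filter_upwards [self_mem_nhdsWithin] with t ht
    exact div_mul_cancel₀ _ (Real.rpow_pos_of_pos (abs_pos.2 ht) q).ne'
  exact tendsto_nhds_unique (hf.tendsto.mono_left nhdsWithin_le_nhds) hprod

lemma exists_forall_abs_le_of_le_abs {g : ℝ → ℝ} (hg : ContinuousOn g {0}ᶜ)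
    (hinf : IsBoundedUnder (· ≤ ·) (cocompact ℝ) fun t => |g t|) {δ : ℝ} (hδ : 0 < δ) :
    ∃ K, ∀ t, δ ≤ |t| → |g t| ≤ K := by
  obtain ⟨B, hB⟩ := hinf
  obtain ⟨S, hS, hSB⟩ := (hasBasis_cocompact.eventually_iff).1 (eventually_map.1 hB)
  have hcore : IsCompact (S \ Metric.ball 0 δ) := hS.diff Metric.isOpen_ball
  obtain ⟨K, hK⟩ := hcore.exists_bound_of_continuousOn <| hg.mono fun t ht h0 => by
    rw [Set.mem_singleton_iff.1 h0, Set.mem_sdiff, Metric.mem_ball, dist_self] at ht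
    exact ht.2 hδ
  refine ⟨max K B, fun t ht => ?_⟩
  by_cases htS : t ∈ S
  · exact (hK t ⟨htS, by simpa using ht⟩).trans (le_max_left _ _)
  · exact (hSB htS).trans (le_max_right _ _)

lemma exists_abs_le_add_mul_abs_rpow {g : ℝ → ℝ} (hg : ContinuousOn g {0}ᶜ)
    (h0 : Tendsto g (𝓝[≠] 0) (𝓝 0))
    (hinf : IsBoundedUnder (· ≤ ·) (cocompact ℝ) fun t => |g t|)
    {ε η : ℝ} (hε : 0 < ε) (hη : 0 < η) :
    ∃ C, 0 ≤ C ∧ ∀ t ≠ 0, |g t| ≤ ε + C * |t| ^ η := by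
  obtain ⟨δ, hδ, hnear⟩ := Metric.tendsto_nhdsWithin_nhds.1 h0 ε hε
  obtain ⟨K, hK⟩ := exists_forall_abs_le_of_le_abs hg hinf hδ
  have hδη : 0 < δ ^ η := Real.rpow_pos_of_pos hδ η
  refine ⟨max K 0 / δ ^ η, by positivity, fun t ht => ?_⟩
  have htη : 0 ≤ |t| ^ η := by positivity
  rcases lt_or_ge |t| δ with hsmall | hlarge
  · have : |g t| < ε := by
      simpa [Real.dist_eq] using hnear ht (by simpa [Real.dist_eq] using hsmall)
    nlinarith [div_nonneg (le_max_right K 0) hδη.le]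
  · calc |g t| ≤ max K 0 := (hK t hlarge).trans (le_max_left _ _)
      _ = max K 0 / δ ^ η * δ ^ η := (div_mul_cancel₀ _ hδη.ne').symm
      _ ≤ max K 0 / δ ^ η * |t| ^ η := by
        gcongr
      _ ≤ ε + max K 0 / δ ^ η * |t| ^ η := le_add_of_nonneg_left hε.le

lemma exists_abs_le_mul_abs_rpow_add_mul_abs_rpow {f : ℝ → ℝ} (hf : Continuous f) {q : ℝ}
    (hq : 0 < q) (h0 : Tendsto (fun t => f t / |t| ^ q) (𝓝[≠] 0) (𝓝 0))
    (hinf : Tendsto (fun t => f t / |t| ^ q) (cocompact ℝ) (𝓝 0))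
    {ε η : ℝ} (hε : 0 < ε) (hη : 0 < η) :
    ∃ C, 0 ≤ C ∧ ∀ t, |f t| ≤ ε * |t| ^ q + C * |t| ^ (q + η) := by
  have hg : ContinuousOn (fun t => f t / |t| ^ q) {0}ᶜ :=
    hf.continuousOn.div (continuous_abs.rpow_const fun _ => Or.inr hq.le).continuousOn
      fun t ht => (Real.rpow_pos_of_pos (abs_pos.2 ht) q).ne'
  obtain ⟨C, hC, hgC⟩ := exists_abs_le_add_mul_abs_rpow hg h0 hinf.abs.isBoundedUnder_le hε hη
  refine ⟨C, hC, fun t => ?_⟩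
  rcases eq_or_ne t 0 with rfl | ht
  · simp [eq_zero_of_tendsto_div_abs_rpow hf.continuousAt hq h0, hq.ne',
      (add_pos hq hη).ne']
  · have htq : 0 < |t| ^ q := Real.rpow_pos_of_pos (abs_pos.2 ht) q
    calc |f t| = |f t / |t| ^ q| * |t| ^ q := by
          rw [abs_div, abs_of_pos htq, div_mul_cancel₀ _ htq.ne']
      _ ≤ (ε + C * |t| ^ η) * |t| ^ q := by gcongr; exact hgC t ht
      _ = ε * |t| ^ q + C * |t| ^ (q + η) := by
          rw [Real.rpow_add (abs_pos.2 ht)]; ring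

lemma abs_intervalIntegral_le_of_abs_le_rpow_of_nonneg {g : ℝ → ℝ} (hg : Continuous g)
    {a b ε C : ℝ} (ha : 0 < a) (hb : 0 < b)
    (hbound : ∀ s, 0 ≤ s → |g s| ≤ ε * s ^ (a - 1) + C * s ^ (b - 1)) {t : ℝ} (ht : 0 ≤ t) :
    |∫ s in (0 : ℝ)..t, g s| ≤ ε / a * t ^ a + C / b * t ^ b := by
  have hia := intervalIntegral.intervalIntegrable_rpow' (a := 0) (b := t) (by linarith : -1 < a - 1)
  have hib := intervalIntegral.intervalIntegrable_rpow' (a := 0) (b := t) (by linarith : -1 < b - 1)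
  calc |∫ s in (0 : ℝ)..t, g s| ≤ ∫ s in (0 : ℝ)..t, |g s| :=
        intervalIntegral.abs_integral_le_integral_abs ht
    _ ≤ ∫ s in (0 : ℝ)..t, (ε * s ^ (a - 1) + C * s ^ (b - 1)) :=
        intervalIntegral.integral_mono_on ht (hg.abs.intervalIntegrable _ _)
          ((hia.const_mul ε).add (hib.const_mul C)) fun s hs => hbound s hs.1
    _ = ε / a * t ^ a + C / b * t ^ b := by
        rw [intervalIntegral.integral_add (hia.const_mul ε) (hib.const_mul C),
          intervalIntegral.integral_const_mul, intervalIntegral.integral_const_mul,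
          integral_rpow (Or.inl (by linarith)), integral_rpow (Or.inl (by linarith)),
          sub_add_cancel, sub_add_cancel, Real.zero_rpow ha.ne', Real.zero_rpow hb.ne']
        ring

lemma abs_intervalIntegral_le_of_abs_le_rpow {g : ℝ → ℝ} (hg : Continuous g)
    {a b ε C : ℝ} (ha : 0 < a) (hb : 0 < b)
    (hbound : ∀ s, |g s| ≤ ε * |s| ^ (a - 1) + C * |s| ^ (b - 1)) (t : ℝ) :
    |∫ s in (0 : ℝ)..t, g s| ≤ ε / a * |t| ^ a + C / b * |t| ^ b := by
  rcases le_total 0 t with ht | ht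
  · rw [abs_of_nonneg ht]
    exact abs_intervalIntegral_le_of_abs_le_rpow_of_nonneg hg ha hb
      (fun s hs => by simpa [abs_of_nonneg hs] using hbound s) ht
  · have hreflect := abs_intervalIntegral_le_of_abs_le_rpow_of_nonneg (g := fun s => g (-s))
      (hg.comp continuous_neg) ha hb (fun s hs => by simpa [abs_of_nonneg hs] using hbound (-s))
      (neg_nonneg.2 ht)
    rwa [intervalIntegral.integral_comp_neg, neg_neg, neg_zero, intervalIntegral.integral_symm,
      abs_neg, ← abs_of_nonpos ht] at hreflect

/-- If `f : ℝ → ℝ` is continuous with `f(t)/|t|^(p-1) → 0` as `t → 0` and as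
`|t| → ∞`, and `F(t) = ∫₀ᵗ f(s) ds`, then for every `ε > 0` and `η > 0` there
is `M_ε ≥ 0` with `|F(t)| ≤ (ε/p)|t|^p + (M_ε/(p+η))|t|^(p+η)` for all `t`. -/
theorem primitive_eps_bound
    (p : ℝ) (hp : 2 ≤ p) (f : ℝ → ℝ) (hf : Continuous f)
    (hf1 : Tendsto (fun t : ℝ => f t / |t| ^ (p - 1)) (nhdsWithin 0 {0}ᶜ) (nhds 0))
    (hf2 : Tendsto (fun t : ℝ => f t / |t| ^ (p - 1)) (atTop ⊔ atBot) (nhds 0))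
    (F : ℝ → ℝ) (hF : ∀ t : ℝ, F t = ∫ s in (0 : ℝ)..t, f s) :
    ∀ ε > (0 : ℝ), ∀ η > (0 : ℝ), ∃ M : ℝ, 0 ≤ M ∧
      ∀ t : ℝ, |F t| ≤ (ε / p) * |t| ^ p + (M / (p + η)) * |t| ^ (p + η) := by
  intro ε hε η hη
  rw [sup_comm, ← cocompact_eq_atBot_atTop] at hf2
  obtain ⟨C, hC, hfC⟩ :=
    exists_abs_le_mul_abs_rpow_add_mul_abs_rpow hf (by linarith) hf1 hf2 hε hη
  refine ⟨C, hC, fun t => hF t ▸ abs_intervalIntegral_le_of_abs_le_rpow hf (by linarith)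
    (by linarith) (fun s => ?_) t⟩
  simpa only [sub_add_eq_add_sub] using hfC s
end
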